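/- For n ≥ 1, (X-1728)·A_{n,8}(X) = A_{n+1,2}(X) - (6(12n-1)(12n+7)/(n(2n+1)))·A_{n,2}(X), where A_{n,2} and A_{n,8} are Atkin-like polynomials defined by three-term recursions. -/

import Mathlib

open Polynomial

/-- Recursion coefficient `a_{n,2} = 24(144n²-29)/((2n+1)(2n-1))`. -/
noncomputable def a2 (n : ℕ) : ℚ :=
  24 * (144 * (n : ℚ) ^ 2 - 29) / ((2 * (n : ℚ) + 1) * (2 * (n : ℚ) - 1))

/-- Recursion coefficient `b_{n,2} = 36(12n-13)(12n-7)(12n-5)(12n+1)/(n(n-1)(2n-1)²)`. -/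
noncomputable def b2 (n : ℕ) : ℚ :=
  36 * (12 * (n : ℚ) - 13) * (12 * (n : ℚ) - 7) * (12 * (n : ℚ) - 5) * (12 * (n : ℚ) + 1) /
    ((n : ℚ) * ((n : ℚ) - 1) * (2 * (n : ℚ) - 1) ^ 2)

/-- The monic Atkin polynomials `A_{n,2}(X)`, defined by the three-term recursion
`A_{n+1,2} = (X - a_n)A_{n,2} - b_n A_{n-1,2}` for `n ≥ 2`. -/
noncomputable def A2 : ℕ → Polynomial ℚ
  | 0 => 1
  | 1 => X - C 720
  | 2 => X ^ 2 - C 1640 * X + C 269280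
  | n + 3 => (X - C (a2 (n + 2))) * A2 (n + 2) - C (b2 (n + 2)) * A2 (n + 1)

/-- Recursion coefficient `a_{n,8} = a_{n+1/2,2} = 24(144(n+1/2)²-29)/((2n+2)(2n))`. -/
noncomputable def a8 (n : ℕ) : ℚ :=
  24 * (144 * ((n : ℚ) + 1 / 2) ^ 2 - 29) / ((2 * (n : ℚ) + 2) * (2 * (n : ℚ)))

/-- Recursion coefficient
`b_{n,8} = b_{n+1/2,2} = 36(12n-7)(12n-1)(12n+1)(12n+7)·4/((2n+1)(2n-1)(2n)²)`. -/
noncomputable def b8 (n : ℕ) : ℚ :=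
  36 * (12 * (n : ℚ) - 7) * (12 * (n : ℚ) - 1) * (12 * (n : ℚ) + 1) * (12 * (n : ℚ) + 7) * 4 /
    ((2 * (n : ℚ) + 1) * (2 * (n : ℚ) - 1) * (2 * (n : ℚ)) ^ 2)

/-- The monic Atkin-like polynomials `A_{n,8}(X)`, defined by the three-term recursion
`A_{n+1,8} = (X - a_{n,8})A_{n,8} - b_{n,8} A_{n-1,8}` for `n ≥ 1`. -/
noncomputable def A8 : ℕ → Polynomial ℚ
  | 0 => 1
  | 1 => X - C 330
  | n + 2 => (X - C (a8 (n + 1))) * A8 (n + 1) - C (b8 (n + 1)) * A8 n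

/-!
If the identity holds at `m` and `m + 1`, expanding `A8 (m + 2)` by its recurrence, substituting
the identity and eliminating `X * A2 (m + 1)` by the recurrence of `A2` yields
`A2 (m + 3) - c28 (m + 2) * A2 (m + 2)`, provided the recursion coefficients satisfy three rational
identities. The factor `X - 1728` plays no role in this step; it is pinned down by the cases
`n = 1, 2`.
-/

theorem mul_eq_sub_mul_of_recurrence {R : Type*} [CommRing R]
    {x t p₀ p₁ p₂ p₃ q₀ q₁ q₂ a₁ a₂ b₁ b₂ a' b' c₀ c₁ c₂ : R}
    (hp₂ : p₂ = (x - a₁) * p₁ - b₁ * p₀) (hp₃ : p₃ = (x - a₂) * p₂ - b₂ * p₁)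
    (hq₂ : q₂ = (x - a') * q₁ - b' * q₀)
    (h₀ : t * q₀ = p₁ - c₀ * p₀) (h₁ : t * q₁ = p₂ - c₁ * p₁)
    (ha : a₂ + c₂ = a' + c₁) (hab : c₁ * a₁ + b' = a' * c₁ + b₂) (hb : c₁ * b₁ = b' * c₀) :
    t * q₂ = p₃ - c₂ * p₂ := by
  rw [hq₂, hp₃]
  linear_combination (x - a') * h₁ - b' * h₀ + c₁ * hp₂ + p₂ * ha - p₁ * hab - p₀ * hb

noncomputable def c28 (n : ℕ) : ℚ :=
  6 * (12 * (n : ℚ) - 1) * (12 * (n : ℚ) + 7) / ((n : ℚ) * (2 * (n : ℚ) + 1))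

theorem a2_add_c28 (n : ℕ) : a2 (n + 3) + c28 (n + 3) = a8 (n + 2) + c28 (n + 2) := by
  simp only [a2, a8, c28]
  push_cast
  -- `ring_nf` turns every denominator into a polynomial in `n` with positive coefficients,
  -- which `field_simp` then knows to be nonzero.
  ring_nf
  field_simp
  ring

theorem c28_mul_a2_add_b8 (n : ℕ) :
    c28 (n + 2) * a2 (n + 2) + b8 (n + 2) = a8 (n + 2) * c28 (n + 2) + b2 (n + 3) := by
  simp only [a2, b2, a8, b8, c28]
  push_cast
  ring_nf
  field_simp
  ring

theorem c28_mul_b2 (n : ℕ) : c28 (n + 2) * b2 (n + 2) = b8 (n + 2) * c28 (n + 1) := by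
  simp only [b2, b8, c28]
  push_cast
  ring_nf
  field_simp
  ring

theorem X_sub_1728_mul_A8_one : (X - C 1728) * A8 1 = A2 2 - C (c28 1) * A2 1 := by
  refine Polynomial.funext fun x => ?_
  norm_num [A8, A2, c28]
  ring

theorem X_sub_1728_mul_A8_two : (X - C 1728) * A8 2 = A2 3 - C (c28 2) * A2 2 := by
  refine Polynomial.funext fun x => ?_
  norm_num [A8, A2, a8, b8, a2, b2, c28]
  ring

theorem X_sub_1728_mul_A8_succ (n : ℕ) :
    (X - C 1728) * A8 (n + 1) = A2 (n + 2) - C (c28 (n + 1)) * A2 (n + 1) := by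
  induction n using Nat.twoStepInduction with
  | zero => exact X_sub_1728_mul_A8_one
  | one => exact X_sub_1728_mul_A8_two
  | more n h₀ h₁ =>
    refine mul_eq_sub_mul_of_recurrence rfl rfl rfl h₀ h₁ ?_ ?_ ?_ <;>
      simp only [← C_add, ← C_mul, a2_add_c28, c28_mul_a2_add_b8, c28_mul_b2]

/-- For `n ≥ 1`,
`(X-1728)·A_{n,8}(X) = A_{n+1,2}(X) - (6(12n-1)(12n+7)/(n(2n+1)))·A_{n,2}(X)`. -/
theorem X_sub_1728_mul_A8_eq (n : ℕ) (hn : 1 ≤ n) :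
    (X - C 1728) * A8 n =
      A2 (n + 1) -
        C (6 * (12 * (n : ℚ) - 1) * (12 * (n : ℚ) + 7) / ((n : ℚ) * (2 * (n : ℚ) + 1))) * A2 n := by
  obtain ⟨m, rfl⟩ := Nat.exists_eq_add_of_le' hn
  exact X_sub_1728_mul_A8_succ m
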